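/- Let F be a field, m, k ≥ 1, let d be a fixed row vector of F^k, and let Q be a quadratic form on F^m with polar form of Gram matrix J. Then the set N of block matrices (1, v, Q(v)d; 0, I_m, Jv^T ⊗ d; 0, 0, I_k), where v ranges over F^m, is a subgroup of AGL_{m+k}(F). -/

import Mathlib

open Matrix

/-- `M` lies in the affine group `AGL_n(F) ≤ GL_{n+1}(F)`:
it has block form `(1 v; 0 A)`, i.e. entry `(0,0)` equals `1` and the rest of
the first column is `0`. -/
def IsAffine {F : Type*} [Field F] {n : ℕ} (M : GL (Fin (n + 1)) F) : Prop :=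
  (M : Matrix (Fin (n + 1)) (Fin (n + 1)) F) 0 0 = 1 ∧
    ∀ i : Fin (n + 1), i ≠ 0 → (M : Matrix (Fin (n + 1)) (Fin (n + 1)) F) i 0 = 0

/-- `M` is a translation: it is affine with linear part `A = I_n`,
i.e. all rows other than the first agree with the identity matrix. -/
def IsTranslation {F : Type*} [Field F] {n : ℕ} (M : GL (Fin (n + 1)) F) : Prop :=
  IsAffine M ∧ ∀ i j : Fin (n + 1), i ≠ 0 →
    (M : Matrix (Fin (n + 1)) (Fin (n + 1)) F) i j = if i = j then 1 else 0

/-- `R` is a regular subgroup of `AGL_n(F)`: all its elements are affine and for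
every `v ∈ F^n` there is exactly one element of `R` with first row `(1, v)`. -/
def IsRegularAffine {F : Type*} [Field F] {n : ℕ} (R : Subgroup (GL (Fin (n + 1)) F)) : Prop :=
  (∀ M ∈ R, IsAffine M) ∧
    ∀ v : Fin n → F, ∃! M : GL (Fin (n + 1)) F, M ∈ R ∧
      ∀ j : Fin n, (M : Matrix (Fin (n + 1)) (Fin (n + 1)) F) 0 j.succ = v j

/-- `M ∈ GL_{n+1}(F)` is unipotent: `(M - I)^{n+1} = 0`. -/
def IsUnipotent {F : Type*} [Field F] {n : ℕ} (M : GL (Fin (n + 1)) F) : Prop :=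
  ((M : Matrix (Fin (n + 1)) (Fin (n + 1)) F) - 1) ^ (n + 1) = 0

/-- The block matrix `(1, v, Q(v)d; 0, I_m, Jvᵀ ⊗ d; 0, 0, I_k)` of size `m+k+1`.
Indices `0`, `1..m`, `m+1..m+k` correspond to the three blocks. -/
def NMat {F : Type*} [Field F] (m k : ℕ) (Q : (Fin m → F) → F)
    (J : Matrix (Fin m) (Fin m) F) (d : Fin k → F) (v : Fin m → F) :
    Matrix (Fin (m + k + 1)) (Fin (m + k + 1)) F :=
  Matrix.of fun i j =>
    if hi0 : (i : ℕ) = 0 then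
      if hj0 : (j : ℕ) = 0 then 1
      else if hjm : (j : ℕ) ≤ m then v ⟨(j : ℕ) - 1, by omega⟩
      else Q v * d ⟨(j : ℕ) - m - 1, by have := j.2; omega⟩
    else if him : (i : ℕ) ≤ m then
      if hj0 : (j : ℕ) = 0 then 0
      else if hjm : (j : ℕ) ≤ m then (if i = j then 1 else 0)
      else (J.mulVec v) ⟨(i : ℕ) - 1, by omega⟩ * d ⟨(j : ℕ) - m - 1, by have := j.2; omega⟩
    else
      if hjm : m < (j : ℕ) then (if i = j then 1 else 0) else 0

/-!
In block form over `Fin 1 ⊕ Fin m ⊕ Fin k`, `N(v)` is the unitriangular matrix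
`(1 A B; 0 1 C; 0 0 1)` with `A = v`, `B = Q(v) d`, `C = J vᵀ ⊗ d`, and such matrices multiply by
`(A, B, C) (A', B', C') = (A + A', B + A C' + B', C + C')`. As `v J wᵀ = Q(v + w) - Q(v) - Q(w)`,
this gives `N(v) N(w) = N(v + w)`: `v ↦ N(v)` is a homomorphism from `(F^m, +)`, and `N` is its
image.
-/

namespace Matrix

section UnitriangularBlocks

variable {R ι₁ ι₂ ι₃ : Type*} [Semiring R] [DecidableEq ι₁] [DecidableEq ι₂] [DecidableEq ι₃]

def unitriangularBlocks (A : Matrix ι₁ ι₂ R) (B : Matrix ι₁ ι₃ R) (C : Matrix ι₂ ι₃ R) :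
    Matrix (ι₁ ⊕ ι₂ ⊕ ι₃) (ι₁ ⊕ ι₂ ⊕ ι₃) R :=
  fromBlocks 1 (fromCols A B) 0 (fromBlocks 1 C 0 1)

theorem unitriangularBlocks_mul [Fintype ι₁] [Fintype ι₂] [Fintype ι₃] (A A' : Matrix ι₁ ι₂ R)
    (B B' : Matrix ι₁ ι₃ R) (C C' : Matrix ι₂ ι₃ R) :
    unitriangularBlocks A B C * unitriangularBlocks A' B' C' =
      unitriangularBlocks (A + A') (B + A * C' + B') (C + C') := by
  simp only [unitriangularBlocks, fromBlocks_multiply, fromCols_mul_fromBlocks, Matrix.one_mul,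
    Matrix.mul_one, Matrix.mul_zero, Matrix.zero_mul, zero_add, add_zero]
  congr 1
  · ext i (j | j) <;> simp [add_comm, add_left_comm]
  · rw [add_comm C']

theorem unitriangularBlocks_zero :
    unitriangularBlocks (0 : Matrix ι₁ ι₂ R) (0 : Matrix ι₁ ι₃ R) 0 = 1 := by
  simp only [unitriangularBlocks, fromCols_zero, fromBlocks_one]

end UnitriangularBlocks

section QuadraticBlocks

variable {R ι κ : Type*} [CommSemiring R] [Fintype ι] [Fintype κ] [DecidableEq ι] [DecidableEq κ]

def quadraticBlocks (Q : (ι → R) → R) (J : Matrix ι ι R) (d : κ → R) (v : ι → R) :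
    Matrix (Fin 1 ⊕ ι ⊕ κ) (Fin 1 ⊕ ι ⊕ κ) R :=
  unitriangularBlocks (replicateRow (Fin 1) v) (replicateRow (Fin 1) (Q v • d))
    (vecMulVec (J *ᵥ v) d)

theorem quadraticBlocks_mul {Q : (ι → R) → R} {J : Matrix ι ι R}
    (hQ : ∀ u w, Q (u + w) = Q u + Q w + u ⬝ᵥ J *ᵥ w) (d : κ → R) (v w : ι → R) :
    quadraticBlocks Q J d v * quadraticBlocks Q J d w = quadraticBlocks Q J d (v + w) := by
  simp only [quadraticBlocks, unitriangularBlocks_mul, ← replicateRow_vecMul, vecMul_vecMulVec,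
    mulVec_add, add_vecMulVec, hQ, add_smul, replicateRow_add]
  rw [add_right_comm (replicateRow _ (Q v • d))]

omit [Fintype κ] in
theorem quadraticBlocks_zero {Q : (ι → R) → R} (hQ : Q 0 = 0) (J : Matrix ι ι R) (d : κ → R) :
    quadraticBlocks Q J d 0 = 1 := by
  simp only [quadraticBlocks, hQ, zero_smul, replicateRow_zero, mulVec_zero, zero_vecMulVec,
    unitriangularBlocks_zero]

end QuadraticBlocks

end Matrix

def blockIndexEquiv (m k : ℕ) : Fin 1 ⊕ Fin m ⊕ Fin k ≃ Fin (m + k + 1) :=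
  ((Equiv.refl (Fin 1)).sumCongr finSumFinEquiv).trans <|
    finSumFinEquiv.trans (finCongr (Nat.add_comm 1 (m + k)))

@[simp] theorem blockIndexEquiv_inl (m k : ℕ) (i : Fin 1) :
    (blockIndexEquiv m k (.inl i) : ℕ) = 0 := by
  simp [blockIndexEquiv, Fin.fin_one_eq_zero i]

@[simp] theorem blockIndexEquiv_inr_inl (m k : ℕ) (j : Fin m) :
    (blockIndexEquiv m k (.inr (.inl j)) : ℕ) = j + 1 := by
  simp [blockIndexEquiv]

@[simp] theorem blockIndexEquiv_inr_inr (m k : ℕ) (t : Fin k) :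
    (blockIndexEquiv m k (.inr (.inr t)) : ℕ) = m + t + 1 := by
  simp [blockIndexEquiv]

section NMat

variable {F : Type*} [Field F] {m k : ℕ}

theorem NMat_eq_submatrix (Q : (Fin m → F) → F) (J : Matrix (Fin m) (Fin m) F) (d : Fin k → F)
    (v : Fin m → F) :
    NMat m k Q J d v =
      (quadraticBlocks Q J d v).submatrix (blockIndexEquiv m k).symm
        (blockIndexEquiv m k).symm := by
  ext i j
  obtain ⟨i, rfl⟩ := (blockIndexEquiv m k).surjective i
  obtain ⟨j, rfl⟩ := (blockIndexEquiv m k).surjective j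
  rw [submatrix_apply, Equiv.symm_apply_apply, Equiv.symm_apply_apply]
  rcases i with i | i | i <;> rcases j with j | j | j <;>
    simp [NMat, quadraticBlocks, unitriangularBlocks, one_apply, vecMulVec_apply, add_assoc,
      -Fin.val_eq_zero_iff]
  exact Subsingleton.elim i j

theorem NMat_mul {Q : (Fin m → F) → F} {J : Matrix (Fin m) (Fin m) F}
    (hQ : ∀ u w, Q (u + w) = Q u + Q w + u ⬝ᵥ J *ᵥ w) (d : Fin k → F) (v w : Fin m → F) :
    NMat m k Q J d v * NMat m k Q J d w = NMat m k Q J d (v + w) := by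
  simp only [NMat_eq_submatrix, submatrix_mul_equiv, quadraticBlocks_mul hQ]

theorem NMat_zero {Q : (Fin m → F) → F} (hQ : Q 0 = 0) (J : Matrix (Fin m) (Fin m) F)
    (d : Fin k → F) : NMat m k Q J d 0 = 1 := by
  rw [NMat_eq_submatrix, quadraticBlocks_zero hQ, submatrix_one_equiv]

def NMatHom {Q : (Fin m → F) → F} {J : Matrix (Fin m) (Fin m) F}
    (hQ : ∀ u w, Q (u + w) = Q u + Q w + u ⬝ᵥ J *ᵥ w) (d : Fin k → F) :
    Multiplicative (Fin m → F) →* Matrix (Fin (m + k + 1)) (Fin (m + k + 1)) F where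
  toFun v := NMat m k Q J d v.toAdd
  map_one' := NMat_zero (by simpa using hQ 0 0) J d
  map_mul' v w := (NMat_mul hQ d v.toAdd w.toAdd).symm

theorem isAffine_of_val_eq_NMat {Q : (Fin m → F) → F} {J : Matrix (Fin m) (Fin m) F}
    {d : Fin k → F} {v : Fin m → F} {M : GL (Fin (m + k + 1)) F}
    (hM : (M : Matrix (Fin (m + k + 1)) (Fin (m + k + 1)) F) = NMat m k Q J d v) :
    IsAffine M := by
  refine ⟨by simp [hM, NMat], fun i hi => ?_⟩
  by_cases him : (i : ℕ) ≤ m <;> simp [hM, NMat, hi, him]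

end NMat

theorem NMat_set_is_subgroup {F : Type*} [Field F] {m k : ℕ}
    (d : Fin k → F) (Q : QuadraticForm F (Fin m → F)) (J : Matrix (Fin m) (Fin m) F)
    (hJ : ∀ u w : Fin m → F, QuadraticMap.polar (fun x => Q x) u w = u ⬝ᵥ J.mulVec w) :
    ∃ N : Subgroup (GL (Fin (m + k + 1)) F),
      (∀ M : GL (Fin (m + k + 1)) F,
          M ∈ N ↔ ∃ v : Fin m → F,
            (M : Matrix (Fin (m + k + 1)) (Fin (m + k + 1)) F) =
              NMat m k (fun x => Q x) J d v) ∧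
      ∀ M ∈ N, IsAffine M := by
  have hQ : ∀ u w, Q (u + w) = Q u + Q w + u ⬝ᵥ J *ᵥ w := fun u w => by
    rw [← hJ, QuadraticMap.polar]
    ring
  refine ⟨(NMatHom hQ d).toHomUnits.range, fun M => ?_, ?_⟩
  · simp [NMatHom, Units.ext_iff, eq_comm]
  · rintro M ⟨v, rfl⟩
    exact isAffine_of_val_eq_NMat (v := Multiplicative.toAdd v) rfl
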